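/- Let G be an r-regular simple graph with n vertices and m edges, where r ≥ 2 (so that m ≥ n), and let q_1 ≤ q_2 ≤ … ≤ q_n = 2r be the eigenvalues of Q(G) listed with multiplicity. Then f(λ, G^{0-1}) = [(λ-m)(λ-2m-n+4r-2) - mn]·(λ-m-n+2r-2)^{m-n}·(λ-m)^{n-1}·∏_{i=1}^{n-1}(λ - m - n - 2 + 2r + q_i). -/

import Mathlib

open Classical

/-- The four symbols `0, 1, +, -` used in `xyz`-transformations. -/
inductive XYZ : Type
  | zero | one | plus | minus

namespace XYZ

/-- The relation on the vertices of a graph `H` given by a symbol: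
`0` gives the empty graph, `1` the complete graph, `+` the graph itself,
`-` its complement. -/
def rel {W : Type*} (H : SimpleGraph W) : XYZ → W → W → Prop
  | .zero => fun _ _ => False
  | .one  => fun u v => u ≠ v
  | .plus => fun u v => H.Adj u v
  | .minus => fun u v => u ≠ v ∧ ¬ H.Adj u v

/-- The incidence relation between a vertex and an edge given by a symbol `z`:
`+` means incident, `-` means non-incident, `0` never, `1` always. -/
def inc {W : Type*} (G : SimpleGraph W) : XYZ → W → G.edgeSet → Prop
  | .zero => fun _ _ => False
  | .one  => fun _ _ => True
  | .plus => fun v e => v ∈ (e : Sym2 W)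
  | .minus => fun v e => v ∉ (e : Sym2 W)

theorem rel_symm {W : Type*} (H : SimpleGraph W) (x : XYZ) {u v : W}
    (h : rel H x u v) : rel H x v u := by
  cases x with
  | zero => exact h.elim
  | one => exact (h : u ≠ v).symm
  | plus => exact H.adj_symm h
  | minus => exact ⟨(h.1).symm, fun h' => h.2 (H.adj_symm h')⟩

theorem rel_irrefl {W : Type*} (H : SimpleGraph W) (x : XYZ) {u : W}
    (h : rel H x u u) : False := by
  cases x with
  | zero => exact h
  | one => exact h rfl
  | plus => exact H.irrefl h
  | minus => exact h.1 rfl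

end XYZ

/-- The `xyz`-transformation `G^{xyz}` of a graph `G`: its vertex set is
`V(G) ⊕ E(G)`; two vertices of `G` are adjacent according to the symbol `x`
(applied to `G`), two edges according to the symbol `y` (applied to the line
graph of `G`), and a vertex and an edge according to the symbol `z`
(`+` = incidence graph `B(G)`, `-` = non-incidence graph `B^c(G)`,
`0` = no vertex-edge edges, `1` = all vertex-edge edges). -/
def xyzTransform {V : Type*} (G : SimpleGraph V) (x y z : XYZ) :
    SimpleGraph (V ⊕ G.edgeSet) where
  Adj a b :=
    match a, b with
    | Sum.inl u, Sum.inl v => XYZ.rel G x u v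
    | Sum.inr e, Sum.inr f => XYZ.rel G.lineGraph y e f
    | Sum.inl v, Sum.inr e => XYZ.inc G z v e
    | Sum.inr e, Sum.inl v => XYZ.inc G z v e
  symm := by
    refine ⟨?_⟩
    rintro (u | e) (v | f) h
    · exact XYZ.rel_symm G x h
    · exact h
    · exact h
    · exact XYZ.rel_symm G.lineGraph y h
  loopless := by
    refine ⟨?_⟩
    rintro (u | e) h
    · exact XYZ.rel_irrefl G x h
    · exact XYZ.rel_irrefl G.lineGraph y h

/-- The signless Laplacian matrix `Q(G) = D(G) + A(G)` of a graph. -/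
noncomputable def signlessLaplacian {V : Type*} [Fintype V] (G : SimpleGraph V) :
    Matrix V V ℝ :=
  Matrix.of fun u v =>
    (if u = v then (G.degree u : ℝ) else 0) + (if G.Adj u v then 1 else 0)

/-- The signless Laplacian characteristic polynomial
`f(λ, G) = det (λ I - Q(G))`, evaluated at a real number `λ`. -/
noncomputable def fQ {V : Type*} [Fintype V] (G : SimpleGraph V) (lam : ℝ) : ℝ :=
  Matrix.det (lam • (1 : Matrix V V ℝ) - signlessLaplacian G)


/-!
Index the vertices of `G^{0-1}` by `V ⊕ E` and let `B` be the vertex-edge incidence matrix, so that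
`B Bᵀ = Q(G)` and `Bᵀ B = 2 I + A(L(G))`. The complement of the line graph then has adjacency
matrix `J + I - Bᵀ B`, and for `r`-regular `G`
`λ I - Q(G^{0-1}) = [(λ - m) I, -J; -J, X - J]` with `X = c I + Bᵀ B`, `c = λ - m - n + 2r - 2`.
The Schur complement of the scalar block is `X - (1 + n / (λ - m)) J`. Since `X 1 = (c + 2r) 1`,
it equals `X (I - s J)` with `det (I - s J) = 1 - s m`, while Sylvester's identity gives
`det X = c^(m-n) det (c I + B Bᵀ) = c^(m-n) ∏ (c + q_i)`. The factor `c + q_n = c + 2r` cancels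
the denominator of `s` and leaves the quadratic factor. This holds away from three values of `λ`
and extends to all `λ` by continuity.
-/

open Matrix Finset

namespace Matrix

variable {K ι κ : Type*} [Field K] [Fintype ι] [Fintype κ] [DecidableEq ι] [DecidableEq κ]

lemma det_fromBlocks_smul_one_neg_of_one {a : K} (ha : a ≠ 0) (D : Matrix κ κ K) :
    det (fromBlocks (a • 1 : Matrix ι ι K) (-of 1) (-of 1) D) =
      a ^ Fintype.card ι * det (D - (Fintype.card ι / a) • of 1) := by
  let _ : Invertible (a • 1 : Matrix ι ι K) := invertibleOfRightInverse _ (a⁻¹ • 1) (by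
    rw [smul_mul_smul_comm, mul_inv_cancel₀ ha, one_mul, one_smul])
  rw [det_fromBlocks₁₁, det_smul, det_one, mul_one]
  congr 2
  rw [show ⅟(a • 1 : Matrix ι ι K) = a⁻¹ • 1 from rfl]
  ext i j
  simp [Matrix.mul_apply, div_eq_mul_inv, mul_comm]

lemma det_sub_smul_of_one_of_mulVec_one {X : Matrix κ κ K} {μ : K} (hX : X *ᵥ 1 = μ • 1)
    (hμ : μ ≠ 0) (t : K) :
    det (X - t • of 1) = det X * (1 - t * Fintype.card κ / μ) := by
  have hXJ : X * of 1 = μ • of 1 := by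
    ext i j
    simpa [mul_apply, mulVec, dotProduct] using congrFun hX i
  have hJ : (of 1 : Matrix κ κ K) =
      replicateCol Unit (1 : κ → K) * replicateRow Unit (1 : κ → K) := by
    rw [← vecMulVec_eq]
    ext
    simp [vecMulVec_apply]
  have hfactor : X - t • of 1 =
      X * (1 + replicateCol Unit (-(t / μ) • 1 : κ → K) * replicateRow Unit (1 : κ → K)) := by
    rw [replicateCol_smul, Matrix.smul_mul, ← hJ, Matrix.mul_add, Matrix.mul_one, Matrix.mul_smul,
      hXJ, smul_smul, neg_mul, div_mul_cancel₀ t hμ, neg_smul, sub_eq_add_neg]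
  rw [hfactor, det_mul, det_one_add_replicateCol_mul_replicateRow]
  congr 1
  simp [dotProduct]
  ring

lemma pow_card_mul_det_smul_one_add_mul_comm {c : K} (hc : c ≠ 0) (A : Matrix ι κ K)
    (B : Matrix κ ι K) :
    c ^ Fintype.card κ * det (c • 1 + A * B) = c ^ Fintype.card ι * det (c • 1 + B * A) := by
  have hAB : c • (1 : Matrix ι ι K) + A * B = c • (1 + (c⁻¹ • A) * B) := by
    rw [Matrix.smul_mul, smul_add, smul_smul, mul_inv_cancel₀ hc, one_smul]
  have hBA : c • (1 : Matrix κ κ K) + B * A = c • (1 + B * (c⁻¹ • A)) := by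
    rw [Matrix.mul_smul, smul_add, smul_smul, mul_inv_cancel₀ hc, one_smul]
  rw [hAB, hBA, det_smul, det_smul, det_one_add_mul_comm]
  ring

lemma det_smul_one_add_eq_prod {R : Type*} [CommRing R] {M : Matrix ι ι R} {k : ℕ}
    (hk : Fintype.card ι = k) {q : Fin k → R} (hq : ∀ x : R, det (x • 1 - M) = ∏ i, (x - q i))
    (c : R) : det (c • 1 + M) = ∏ i, (c + q i) := by
  have hneg : c • 1 + M = -((-c) • 1 - M) := by rw [neg_sub, neg_smul, sub_neg_eq_add, add_comm]
  have hsign : ∏ i, (c + q i) = ∏ i, ((-1) * (-c - q i)) :=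
    prod_congr rfl fun _ _ => by ring
  rw [hneg, det_neg, hq, hk, hsign, prod_mul_distrib, prod_const, card_univ, Fintype.card_fin]

end Matrix

lemma Fin.prod_univ_eq_mul_prod_castLE {M : Type*} [CommMonoid M] {n : ℕ} (hn : 0 < n)
    (f : Fin n → M) :
    ∏ i, f i = f ⟨n - 1, by omega⟩ * ∏ i : Fin (n - 1), f (Fin.castLE (Nat.sub_le n 1) i) := by
  obtain ⟨k, rfl⟩ : ∃ k, n = k + 1 := ⟨n - 1, by omega⟩
  rw [Fin.prod_univ_castSucc, mul_comm]
  rfl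

lemma Sym2.card_filter_mem_and_mem {V : Type*} [Fintype V] {e f : Sym2 V} (hef : e ≠ f) :
    #{v | v ∈ e ∧ v ∈ f} = if ∃ v, v ∈ e ∧ v ∈ f then 1 else 0 := by
  have hle : #{v | v ∈ e ∧ v ∈ f} ≤ 1 := by
    refine card_le_one.mpr fun a ha b hb => by_contra fun hab => hef ?_
    simp only [mem_filter, mem_univ, true_and] at ha hb
    rw [(Sym2.mem_and_mem_iff hab).mp ⟨ha.1, hb.1⟩, (Sym2.mem_and_mem_iff hab).mp ⟨ha.2, hb.2⟩]
  split_ifs with h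
  · obtain ⟨v, hv⟩ := h
    exact le_antisymm hle (card_pos.mpr ⟨v, by simpa using hv⟩)
  · exact card_eq_zero.mpr (filter_eq_empty_iff.mpr fun v _ hv => h ⟨v, hv⟩)

-- `fQ` is elaborated with the classical `DecidableEq` instance; this lets `rw` use any other.
lemma fQ_eq_det {V : Type*} [Fintype V] [DecidableEq V] (G : SimpleGraph V) (x : ℝ) :
    fQ G x = det (x • 1 - signlessLaplacian G) := by
  unfold fQ
  congr
  exact Subsingleton.elim _ _

lemma continuous_fQ {V : Type*} [Fintype V] (G : SimpleGraph V) : Continuous (fQ G) := by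
  unfold fQ
  fun_prop

namespace SimpleGraph

variable {V : Type*} (G : SimpleGraph V)

lemma adjMatrix_compl {α : Type*} [AddGroupWithOne α] [DecidableEq V] [DecidableRel G.Adj]
    [DecidableRel Gᶜ.Adj] : Gᶜ.adjMatrix α = of 1 - 1 - G.adjMatrix α := by
  ext u v
  by_cases huv : u = v
  · simp [huv]
  · by_cases h : G.Adj u v <;> simp [huv, h, one_apply]

noncomputable def edgeIncMatrix : Matrix V G.edgeSet ℝ :=
  (G.incMatrix ℝ).submatrix id Subtype.val

lemma edgeIncMatrix_apply (v : V) (e : G.edgeSet) :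
    G.edgeIncMatrix v e = if v ∈ (e : Sym2 V) then 1 else 0 := by
  simp [edgeIncMatrix, incMatrix_apply', incidenceSet, e.2]

lemma adjMatrix_xyzTransform_zero_minus_one :
    (xyzTransform G .zero .minus .one).adjMatrix ℝ =
      fromBlocks 0 (of 1) (of 1) (G.lineGraphᶜ.adjMatrix ℝ) := by
  ext (u | e) (v | f) <;> simp [adjMatrix, xyzTransform, XYZ.rel, XYZ.inc]
  -- the two sides differ only in their `Decidable` instances
  congr

section Finite

variable [Fintype V]

lemma signlessLaplacian_eq_degMatrix_add_adjMatrix [DecidableEq V] :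
    signlessLaplacian G = G.degMatrix ℝ + G.adjMatrix ℝ := by
  ext u v
  simp [signlessLaplacian, degMatrix, diagonal_apply, adjMatrix_apply]

lemma signlessLaplacian_eq_incMatrix_mul_transpose :
    signlessLaplacian G = G.incMatrix ℝ * (G.incMatrix ℝ)ᵀ := by
  rw [incMatrix_mul_transpose]
  ext u v
  by_cases huv : u = v <;> simp [signlessLaplacian, huv]

lemma card_le_card_edgeSet_of_isRegularOfDegree {r : ℕ} (hreg : G.IsRegularOfDegree r)
    (hr : 2 ≤ r) : Fintype.card V ≤ Fintype.card G.edgeSet := by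
  have hsum := G.sum_degrees_eq_twice_card_edges
  simp only [hreg.degree_eq, sum_const, card_univ, smul_eq_mul] at hsum
  rw [← edgeFinset_card]
  nlinarith

lemma sum_edgeSet_eq_sum_of_notMem {M : Type*} [AddCommMonoid M] {f : Sym2 V → M}
    (hf : ∀ e ∉ G.edgeSet, f e = 0) :
    ∑ e : G.edgeSet, f e = ∑ e, f e := by
  rw [← sum_subtype G.edgeFinset (fun _ => mem_edgeFinset) f]
  exact sum_subset (subset_univ _) fun e _ he => hf e (by simpa using he)

lemma card_filter_mem_edge (e : G.edgeSet) : #{v | v ∈ (e : Sym2 V)} = 2 := by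
  obtain ⟨e, he⟩ := e
  induction e using Sym2.ind with
  | _ a b =>
    rw [show ({v | v ∈ s(a, b)} : Finset V) = {a, b} by ext; simp, card_pair (G.ne_of_adj he)]

lemma edgeIncMatrix_mul_transpose :
    G.edgeIncMatrix * G.edgeIncMatrixᵀ = signlessLaplacian G := by
  rw [signlessLaplacian_eq_incMatrix_mul_transpose]
  ext u v
  simp only [mul_apply, transpose_apply, edgeIncMatrix, submatrix_apply, id]
  exact G.sum_edgeSet_eq_sum_of_notMem (f := fun e => G.incMatrix ℝ u e * G.incMatrix ℝ v e)
    fun e he => by simp [G.incMatrix_of_notMem_incidenceSet (fun h => he h.1)]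

lemma transpose_mul_edgeIncMatrix :
    G.edgeIncMatrixᵀ * G.edgeIncMatrix = (2 : ℝ) • 1 + G.lineGraph.adjMatrix ℝ := by
  ext e f
  simp only [mul_apply, transpose_apply, edgeIncMatrix_apply, ite_zero_mul_ite_zero, mul_one,
    sum_boole, Matrix.add_apply, Matrix.smul_apply]
  by_cases hef : e = f
  · subst hef
    simp [card_filter_mem_edge]
  · simp [hef, Sym2.card_filter_mem_and_mem (Subtype.coe_injective.ne hef),
      lineGraph_adj_iff_exists]

lemma edgeIncMatrix_mulVec_one {r : ℕ} (hreg : G.IsRegularOfDegree r) :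
    G.edgeIncMatrix *ᵥ 1 = (r : ℝ) • 1 := by
  ext v
  simp only [mulVec, dotProduct, edgeIncMatrix, submatrix_apply, id, Pi.one_apply, mul_one]
  rw [G.sum_edgeSet_eq_sum_of_notMem fun e he =>
      G.incMatrix_of_notMem_incidenceSet (fun h => he h.1), sum_incMatrix_apply, hreg v]
  simp

lemma transpose_edgeIncMatrix_mulVec_one : G.edgeIncMatrixᵀ *ᵥ 1 = (2 : ℝ) • 1 := by
  ext e
  simp [mulVec, dotProduct, edgeIncMatrix_apply, card_filter_mem_edge]

lemma transpose_mul_edgeIncMatrix_mulVec_one {r : ℕ} (hreg : G.IsRegularOfDegree r) :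
    (G.edgeIncMatrixᵀ * G.edgeIncMatrix) *ᵥ 1 = (2 * r : ℝ) • 1 := by
  rw [← mulVec_mulVec, G.edgeIncMatrix_mulVec_one hreg, mulVec_smul,
    transpose_edgeIncMatrix_mulVec_one, smul_smul, mul_comm]

lemma adjMatrix_compl_lineGraph :
    G.lineGraphᶜ.adjMatrix ℝ = of 1 + 1 - G.edgeIncMatrixᵀ * G.edgeIncMatrix := by
  rw [adjMatrix_compl, transpose_mul_edgeIncMatrix]
  module

lemma degMatrix_xyzTransform_zero_minus_one {r : ℕ} (hreg : G.IsRegularOfDegree r) :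
    (xyzTransform G .zero .minus .one).degMatrix ℝ =
      fromBlocks ((Fintype.card G.edgeSet : ℝ) • 1) 0 0
        ((Fintype.card V + Fintype.card G.edgeSet + 1 - 2 * r : ℝ) • 1) := by
  have hdeg : (fun x => ((xyzTransform G .zero .minus .one).degree x : ℝ)) =
      Sum.elim (fun _ => (Fintype.card G.edgeSet : ℝ))
        (fun _ => Fintype.card V + Fintype.card G.edgeSet + 1 - 2 * r) := by
    funext x
    rw [← mul_one ((xyzTransform G .zero .minus .one).degree x : ℝ),
      ← adjMatrix_mulVec_const_apply, Function.const_one, adjMatrix_xyzTransform_zero_minus_one,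
      adjMatrix_compl_lineGraph, fromBlocks_mulVec]
    rcases x with v | e
    · simp [mulVec, dotProduct]
    · simp only [Sum.elim_inr, Pi.one_comp, add_mulVec, sub_mulVec, one_mulVec,
        transpose_mul_edgeIncMatrix_mulVec_one G hreg]
      simp [mulVec, dotProduct]
      ring
  rw [smul_one_eq_diagonal, smul_one_eq_diagonal, fromBlocks_diagonal, ← hdeg]
  rfl

lemma signlessLaplacian_xyzTransform_zero_minus_one {r : ℕ} (hreg : G.IsRegularOfDegree r) :
    signlessLaplacian (xyzTransform G .zero .minus .one) =
      fromBlocks ((Fintype.card G.edgeSet : ℝ) • 1) (of 1) (of 1)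
        ((Fintype.card V + Fintype.card G.edgeSet + 2 - 2 * r : ℝ) • 1 + of 1 -
          G.edgeIncMatrixᵀ * G.edgeIncMatrix) := by
  rw [signlessLaplacian_eq_degMatrix_add_adjMatrix, G.degMatrix_xyzTransform_zero_minus_one hreg,
    adjMatrix_xyzTransform_zero_minus_one, adjMatrix_compl_lineGraph, fromBlocks_add]
  simp only [add_zero, zero_add]
  congr 1
  module

lemma fQ_xyzTransform_zero_minus_one_eq_det {r : ℕ} (hreg : G.IsRegularOfDegree r) {lam : ℝ}
    (ha : lam - Fintype.card G.edgeSet ≠ 0) :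
    fQ (xyzTransform G .zero .minus .one) lam =
      (lam - Fintype.card G.edgeSet) ^ Fintype.card V *
        det ((lam - Fintype.card G.edgeSet - Fintype.card V + 2 * r - 2) • 1 +
            G.edgeIncMatrixᵀ * G.edgeIncMatrix -
          (1 + Fintype.card V / (lam - Fintype.card G.edgeSet)) • of 1) := by
  have hblocks : lam • 1 - signlessLaplacian (xyzTransform G .zero .minus .one) =
      fromBlocks ((lam - Fintype.card G.edgeSet) • 1) (-of 1) (-of 1)
        ((lam - Fintype.card G.edgeSet - Fintype.card V + 2 * r - 2) • 1 +
          G.edgeIncMatrixᵀ * G.edgeIncMatrix - of 1) := by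
    rw [G.signlessLaplacian_xyzTransform_zero_minus_one hreg, ← fromBlocks_one, fromBlocks_smul,
      sub_eq_add_neg, fromBlocks_neg, fromBlocks_add]
    simp only [smul_zero, zero_add]
    congr 1 <;> module
  rw [fQ_eq_det, hblocks, det_fromBlocks_smul_one_neg_of_one ha, sub_sub, add_smul, one_smul]

lemma det_smul_one_add_transpose_mul_edgeIncMatrix {r : ℕ} (hreg : G.IsRegularOfDegree r)
    (hr : 2 ≤ r) {q : Fin (Fintype.card V) → ℝ} (hq : ∀ x, fQ G x = ∏ i, (x - q i)) {c : ℝ}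
    (hc : c ≠ 0) :
    det (c • 1 + G.edgeIncMatrixᵀ * G.edgeIncMatrix) =
      c ^ (Fintype.card G.edgeSet - Fintype.card V) * ∏ i, (c + q i) := by
  have hsylvester := pow_card_mul_det_smul_one_add_mul_comm hc G.edgeIncMatrixᵀ G.edgeIncMatrix
  rw [G.edgeIncMatrix_mul_transpose, det_smul_one_add_eq_prod rfl hq,
    ← pow_sub_mul_pow c (G.card_le_card_edgeSet_of_isRegularOfDegree hreg hr)] at hsylvester
  exact mul_left_cancel₀ (pow_ne_zero _ hc) (by rw [hsylvester]; ring)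

lemma fQ_xyzTransform_zero_minus_one_of_ne {r : ℕ} (hreg : G.IsRegularOfDegree r)
    (hr : 2 ≤ r) (hV : 0 < Fintype.card V) {q : Fin (Fintype.card V) → ℝ}
    (hlast : q ⟨Fintype.card V - 1, by omega⟩ = 2 * r) (hq : ∀ x, fQ G x = ∏ i, (x - q i))
    {lam : ℝ} (ha : lam - Fintype.card G.edgeSet ≠ 0)
    (hc : lam - Fintype.card G.edgeSet - Fintype.card V + 2 * r - 2 ≠ 0)
    (hμ : lam - Fintype.card G.edgeSet - Fintype.card V + 4 * r - 2 ≠ 0) :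
    fQ (xyzTransform G .zero .minus .one) lam =
      ((lam - Fintype.card G.edgeSet) *
          (lam - 2 * Fintype.card G.edgeSet - Fintype.card V + 4 * r - 2) -
          Fintype.card G.edgeSet * Fintype.card V) *
        (lam - Fintype.card G.edgeSet - Fintype.card V + 2 * r - 2) ^
          (Fintype.card G.edgeSet - Fintype.card V) *
        (lam - Fintype.card G.edgeSet) ^ (Fintype.card V - 1) *
        ∏ i : Fin (Fintype.card V - 1), (lam - Fintype.card G.edgeSet - Fintype.card V - 2 +
          2 * r + q (Fin.castLE (Nat.sub_le _ 1) i)) := by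
  set c := lam - Fintype.card G.edgeSet - Fintype.card V + 2 * r - 2 with hc_def
  have hX : (c • 1 + G.edgeIncMatrixᵀ * G.edgeIncMatrix) *ᵥ 1 = (c + 2 * r) • 1 := by
    rw [add_mulVec, smul_mulVec, one_mulVec, G.transpose_mul_edgeIncMatrix_mulVec_one hreg,
      add_smul]
  have hμ' : c + 2 * r ≠ 0 := by
    rw [hc_def]
    contrapose! hμ
    linarith
  have hprod : ∏ i : Fin (Fintype.card V - 1), (lam - Fintype.card G.edgeSet - Fintype.card V -
      2 + 2 * r + q (Fin.castLE (Nat.sub_le _ 1) i)) =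
        ∏ i, (c + q (Fin.castLE (Nat.sub_le _ 1) i)) :=
    prod_congr rfl fun _ _ => by rw [hc_def]; ring
  rw [G.fQ_xyzTransform_zero_minus_one_eq_det hreg ha, det_sub_smul_of_one_of_mulVec_one hX hμ',
    G.det_smul_one_add_transpose_mul_edgeIncMatrix hreg hr hq hc,
    Fin.prod_univ_eq_mul_prod_castLE hV, hlast, ← pow_sub_one_mul hV.ne', hprod,
    show lam - 2 * Fintype.card G.edgeSet - Fintype.card V + 4 * r - 2 =
      c + 2 * r - Fintype.card G.edgeSet by rw [hc_def]; ring]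
  field_simp
  ring

end Finite

end SimpleGraph

theorem signless_charpoly_xyz_zm1 {V : Type*} [Fintype V] (G : SimpleGraph V) (r n m : ℕ)
    (hn : Fintype.card V = n) (hm : Fintype.card G.edgeSet = m)
    (hreg : G.IsRegularOfDegree r) (hr2 : 2 ≤ r) (hn0 : 0 < n)
    (q : Fin n → ℝ)
    (hlast : q ⟨n - 1, by omega⟩ = 2 * r)
    (hq : ∀ x : ℝ, fQ G x = ∏ i : Fin n, (x - q i)) :
    ∀ lam : ℝ,
      fQ (xyzTransform G XYZ.zero XYZ.minus XYZ.one) lam =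
        ((lam - m) * (lam - 2 * m - n + 4 * r - 2) - m * n) *
          (lam - m - n + 2 * r - 2) ^ (m - n) * (lam - m) ^ (n - 1) *
          ∏ i : Fin (n - 1), (lam - m - n - 2 + 2 * r + q (Fin.castLE (Nat.sub_le n 1) i)) := by
  -- both sides are continuous in `lam`, so it suffices to avoid the poles of the Schur complement
  set S : Set ℝ := {(m : ℝ), (m : ℝ) + n - 2 * r + 2, (m : ℝ) + n - 4 * r + 2}
  refine congrFun (Continuous.ext_on (S.toFinite.countable.dense_compl ℝ) (continuous_fQ _)
    (by fun_prop) fun x hx => ?_)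
  simp only [S, Set.mem_compl_iff, Set.mem_insert_iff, Set.mem_singleton_iff, not_or] at hx
  obtain ⟨ha, hc, hμ⟩ := hx
  subst hn hm
  exact G.fQ_xyzTransform_zero_minus_one_of_ne hreg hr2 hn0 hlast hq (sub_ne_zero.2 ha)
    (fun h => hc (by linarith)) (fun h => hμ (by linarith))
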